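/- arXiv:0808.2944 — 3 statements merged into one kernel-verified Lean document; each statement's English description precedes it below -/
import Mathlib

section
/- Let G be a countable group, π a unitary representation of G on a complex Hilbert space H, and N ∈ ℕ. Assume ξ₁ is a Parseval frame vector for H, and ξ₂,…,ξ_{N+1} ∈ H are such that each ξᵢ is a Parseval frame vector for Mᵢ := closure(span{π(g)ξᵢ : g ∈ G}) (with pᵢ' the orthogonal projection of H onto Mᵢ), the vectors ξ₁,…,ξ_{N+1} are mutually strongly disjoint, and there is no nonzero Bessel vector ζ ∈ H that is strongly disjoint from all of ξ₁,…,ξ_{N+1}. Then a vector η ∈ H is a Parseval frame vector for H if and only if there exist u₁',…,u_{N+1}' ∈ π(G)' with uᵢ'pᵢ' = uᵢ' for all i, η = u₁'ξ₁ + ⋯ + u_{N+1}'ξ_{N+1}, and ∑_{i=1}^{N+1} uᵢ'(uᵢ')* = id_H; moreover such operators u₁',…,u_{N+1}' are unique. -/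
noncomputable section

open scoped ComplexConjugate

local notation "⟪" x ", " y "⟫" => @inner ℂ _ _ x y

/-- A group is ICC if every nontrivial conjugacy class is infinite. -/
def IsICC (G : Type*) [Group G] : Prop :=
  ∀ g : G, g ≠ 1 → {x : G | ∃ h : G, x = h * g * h⁻¹}.Infinite

variable {G : Type*} [Group G]
variable {H : Type*} [NormedAddCommGroup H] [InnerProductSpace ℂ H]

/-- `ξ` is a Parseval frame vector for the whole space `H`. -/
def IsParsevalFrameVector (π : G →* (H ≃ₗᵢ[ℂ] H)) (ξ : H) : Prop :=
  ∀ f : H, ∑' g : G, ‖⟪f, π g ξ⟫‖ ^ 2 = ‖f‖ ^ 2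

/-- `ξ` is a Parseval frame vector for the (closed) subspace `M` of `H`. -/
def IsParsevalFrameVectorIn (π : G →* (H ≃ₗᵢ[ℂ] H)) (ξ : H) (M : Submodule ℂ H) : Prop :=
  (∀ g : G, π g ξ ∈ M) ∧ ∀ f ∈ M, ∑' g : G, ‖⟪f, π g ξ⟫‖ ^ 2 = ‖f‖ ^ 2

/-- The closed linear span of the orbit `{π(g)ξ : g ∈ G}`. -/
def orbitSpan (π : G →* (H ≃ₗᵢ[ℂ] H)) (ξ : H) : Submodule ℂ H :=
  (Submodule.span ℂ (Set.range fun g : G => π g ξ)).topologicalClosure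

/-- `ξ₁, …, ξ_k` (with `ξ i` a Parseval frame vector for `M i`) form a strongly disjoint
`k`-tuple: `{π(g)ξ₁ ⊕ ⋯ ⊕ π(g)ξ_k : g ∈ G}` is a Parseval frame for `M₁ ⊕ ⋯ ⊕ M_k`. -/
def StronglyDisjointTuple {k : ℕ} (π : G →* (H ≃ₗᵢ[ℂ] H)) (ξ : Fin k → H)
    (M : Fin k → Submodule ℂ H) : Prop :=
  ∀ f : Fin k → H, (∀ i, f i ∈ M i) →
    ∑' g : G, ‖∑ i, ⟪f i, π g (ξ i)⟫‖ ^ 2 = ∑ i, ‖f i‖ ^ 2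

/-- `T` belongs to the commutant `π(G)'`. -/
def InCommutant (π : G →* (H ≃ₗᵢ[ℂ] H)) (T : H →L[ℂ] H) : Prop :=
  ∀ (g : G) (x : H), T (π g x) = π g (T x)

/-- The closed subspace `closure {T ξ : T ∈ π(G)'}`. -/
def commOrbit (π : G →* (H ≃ₗᵢ[ℂ] H)) (ξ : H) : Submodule ℂ H :=
  (Submodule.span ℂ {x : H | ∃ T : H →L[ℂ] H, InCommutant π T ∧ x = T ξ}).topologicalClosure

/-- `p` is the orthogonal projection of `H` onto the subspace `M`. -/
def IsOrthoProjOnto (M : Submodule ℂ H) (p : H →L[ℂ] H) : Prop :=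
  ∀ x : H, p x ∈ M ∧ x - p x ∈ Mᗮ

/-- `ζ` is a Bessel vector for the representation `π`. -/
def IsBesselVector (π : G →* (H ≃ₗᵢ[ℂ] H)) (ζ : H) : Prop :=
  ∃ B : ℝ, 0 < B ∧ ∀ f : H, ∀ s : Finset G, ∑ g ∈ s, ‖⟪f, π g ζ⟫‖ ^ 2 ≤ B * ‖f‖ ^ 2

/-- Strong disjointness of a Parseval frame vector `ξ` (for the subspace `M` of `H`, under `π`)
and `ζ` (for the subspace `M₂` of `H₂`, under `σ`), expressed by the vanishing of the mixed
sums `∑_g ⟨v, π(g)ξ⟩ conj ⟨w, σ(g)ζ⟩`. -/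
def StronglyDisjointPairIn (π : G →* (H ≃ₗᵢ[ℂ] H)) {H₂ : Type*} [NormedAddCommGroup H₂]
    [InnerProductSpace ℂ H₂] (σ : G →* (H₂ ≃ₗᵢ[ℂ] H₂)) (ξ : H) (ζ : H₂)
    (M : Submodule ℂ H) (M₂ : Submodule ℂ H₂) : Prop :=
  ∀ v ∈ M, ∀ w ∈ M₂, ∑' g : G, ⟪v, π g ξ⟫ * (starRingEnd ℂ) ⟪w, σ g ζ⟫ = 0

/-- A Riesz sequence: two-sided ℓ²-bounds on finite linear combinations. -/
def IsRieszSequence {J : Type*} (f : J → H) : Prop :=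
  ∃ A B : ℝ, 0 < A ∧ 0 < B ∧ ∀ c : J →₀ ℂ,
    A * ∑ j ∈ c.support, ‖c j‖ ^ 2 ≤ ‖∑ j ∈ c.support, c j • f j‖ ^ 2 ∧
    ‖∑ j ∈ c.support, c j • f j‖ ^ 2 ≤ B * ∑ j ∈ c.support, ‖c j‖ ^ 2

/-!
Write `Θ_ξ f = (⟪π g ξ, f⟫)_g ∈ ℓ²(G)` for the analysis operator of `ξ`. For a Parseval frame
vector `ξᵢ` of `Mᵢ` one has `Θᵢ* Θᵢ = pᵢ`, and strong disjointness says `Θⱼ* Θᵢ = 0` for `i ≠ j`.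
If every `uᵢ` commutes with `π`, the analysis operator of `∑ uᵢ ξᵢ` is `A = ∑ Θᵢ uᵢ*`; hence
`Θⱼ* A = uⱼ*`, which gives uniqueness, and `A* A = ∑ uᵢ uᵢ*`, which gives the "if" direction.
Conversely, for a Parseval frame vector `η` put `uᵢ = Θ_η* Θᵢ`, which commutes with `π`. Then
`ζ = η - ∑ uᵢ ξᵢ` has analysis operator `Θ_η - A`, which every `Θⱼ*` annihilates, so `ζ` is a
Bessel vector strongly disjoint from all `ξᵢ` and vanishes by maximality. Finally `Θ_η = A`
gives `∑ uᵢ uᵢ* = Θ_η* Θ_η = 1`.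
-/

open ContinuousLinearMap

local notation "ℓ²(" G ")" => lp (fun _ : G => ℂ) 2

theorem lp.norm_sq_eq_tsum {ι : Type*} {E : ι → Type*} [∀ i, NormedAddCommGroup (E i)]
    (f : lp E 2) : ‖f‖ ^ 2 = ∑' i, ‖f i‖ ^ 2 := by
  simpa using lp.norm_rpow_eq_tsum (p := 2) (by norm_num) f

theorem lp.sum_norm_sq_le {ι : Type*} {E : ι → Type*} [∀ i, NormedAddCommGroup (E i)]
    (f : lp E 2) (s : Finset ι) : ∑ i ∈ s, ‖f i‖ ^ 2 ≤ ‖f‖ ^ 2 := by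
  simpa using lp.sum_rpow_le_norm_rpow (p := 2) (by norm_num) f s

theorem ContinuousLinearMap.adjoint_comp_self_eq_of_norm_eq {E F F' : Type*}
    [NormedAddCommGroup E] [InnerProductSpace ℂ E] [CompleteSpace E]
    [NormedAddCommGroup F] [InnerProductSpace ℂ F] [CompleteSpace F]
    [NormedAddCommGroup F'] [InnerProductSpace ℂ F'] [CompleteSpace F']
    (T : E →L[ℂ] F) (S : E →L[ℂ] F') (h : ∀ x, ‖T x‖ = ‖S x‖) :
    adjoint T ∘L T = adjoint S ∘L S := by
  refine coe_injective ((ext_inner_map _ _).1 fun x => ?_)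
  simp only [coe_coe, comp_apply, adjoint_inner_left, inner_self_eq_norm_sq_to_K, h]

theorem IsOrthoProjOnto.eq_starProjection {M : Submodule ℂ H} [M.HasOrthogonalProjection]
    {p : H →L[ℂ] H} (hp : IsOrthoProjOnto M p) : p = M.starProjection :=
  ext fun x => (M.eq_starProjection_of_mem_orthogonal (hp x).1 (hp x).2).symm

theorem IsParsevalFrameVector.isParsevalFrameVectorIn_top {π : G →* (H ≃ₗᵢ[ℂ] H)} {η : H}
    (hη : IsParsevalFrameVector π η) : IsParsevalFrameVectorIn π η ⊤ :=
  ⟨fun _ => Submodule.mem_top, fun f _ => hη f⟩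

def IsAnalysisOp (π : G →* (H ≃ₗᵢ[ℂ] H)) (ζ : H) (T : H →L[ℂ] ℓ²(G)) : Prop :=
  ∀ f g, T f g = ⟪π g ζ, f⟫

namespace IsAnalysisOp

variable {π : G →* (H ≃ₗᵢ[ℂ] H)} {ζ ξ : H} {T S : H →L[ℂ] ℓ²(G)}

theorem unique (hT : IsAnalysisOp π ζ T) (hS : IsAnalysisOp π ζ S) : T = S :=
  ext fun f => lp.ext <| funext fun g => (hT f g).trans (hS f g).symm

theorem zero : IsAnalysisOp π 0 0 := fun f g => by simp

theorem sub (hT : IsAnalysisOp π ζ T) (hS : IsAnalysisOp π ξ S) :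
    IsAnalysisOp π (ζ - ξ) (T - S) := fun f g => by
  simp [hT f g, hS f g]

theorem sum {ι : Type*} [Fintype ι] {ζ : ι → H} {T : ι → H →L[ℂ] ℓ²(G)}
    (hT : ∀ i, IsAnalysisOp π (ζ i) (T i)) : IsAnalysisOp π (∑ i, ζ i) (∑ i, T i) :=
  fun f g => by
    rw [sum_apply, lp.coeFn_sum, Finset.sum_apply, map_sum, sum_inner]
    exact Finset.sum_congr rfl fun i _ => hT i f g

theorem isBesselVector (hT : IsAnalysisOp π ζ T) : IsBesselVector π ζ := by
  refine ⟨‖T‖ ^ 2 + 1, by positivity, fun f s => ?_⟩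
  calc ∑ g ∈ s, ‖⟪f, π g ζ⟫‖ ^ 2 = ∑ g ∈ s, ‖T f g‖ ^ 2 := by
        simp only [hT f, norm_inner_symm]
    _ ≤ ‖T f‖ ^ 2 := lp.sum_norm_sq_le _ s
    _ ≤ (‖T‖ * ‖f‖) ^ 2 := by gcongr; exact T.le_opNorm f
    _ ≤ (‖T‖ ^ 2 + 1) * ‖f‖ ^ 2 := by nlinarith [sq_nonneg ‖f‖]

theorem inner_eq_tsum (hT : IsAnalysisOp π ζ T) (hS : IsAnalysisOp π ξ S) (v w : H) :
    ⟪T v, S w⟫ = ∑' g, ⟪v, π g ζ⟫ * (starRingEnd ℂ) ⟪w, π g ξ⟫ := by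
  simp only [lp.inner_eq_tsum, hT v, hS w, RCLike.inner_apply, inner_conj_symm, mul_comm]

theorem stronglyDisjointPairIn_iff (hT : IsAnalysisOp π ζ T) (hS : IsAnalysisOp π ξ S)
    (M M' : Submodule ℂ H) :
    StronglyDisjointPairIn π π ζ ξ M M' ↔ ∀ v ∈ M, ∀ w ∈ M', ⟪T v, S w⟫ = 0 := by
  simp only [StronglyDisjointPairIn, hT.inner_eq_tsum hS]

variable [CompleteSpace H]

theorem comp_adjoint {A : H →L[ℂ] H} (hA : InCommutant π A) (hT : IsAnalysisOp π ζ T) :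
    IsAnalysisOp π (A ζ) (T ∘L adjoint A) := fun f g => by
  rw [comp_apply, hT, adjoint_inner_right, hA]

theorem isParsevalFrameVector (hT : IsAnalysisOp π ζ T) (hTT : adjoint T ∘L T = 1) :
    IsParsevalFrameVector π ζ := fun f => by
  rw [← (norm_map_iff_adjoint_comp_self T).2 hTT f, lp.norm_sq_eq_tsum]
  simp only [hT f, norm_inner_symm]

theorem inCommutant_adjoint_comp (hT : IsAnalysisOp π ζ T) (hS : IsAnalysisOp π ξ S) :
    InCommutant π (adjoint S ∘L T) := by
  intro g x
  refine ext_inner_right ℂ fun y => ?_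
  rw [comp_apply, comp_apply, adjoint_inner_left, LinearIsometryEquiv.inner_map_eq_flip,
    adjoint_inner_left, hT.inner_eq_tsum hS, hT.inner_eq_tsum hS, ← (Equiv.mulLeft g).tsum_eq]
  congr 1 with k
  simp [LinearIsometryEquiv.inner_map_eq_flip]

end IsAnalysisOp

namespace IsParsevalFrameVectorIn

variable {π : G →* (H ≃ₗᵢ[ℂ] H)} {M M' : Submodule ℂ H} [M.HasOrthogonalProjection]
  [M'.HasOrthogonalProjection] {ξ ξ' : H} (hξ : IsParsevalFrameVectorIn π ξ M)
include hξ

theorem inner_starProjection (f : H) (g : G) :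
    ⟪π g ξ, M.starProjection f⟫ = ⟪π g ξ, f⟫ := by
  rw [← M.inner_starProjection_left_eq_right, M.starProjection_eq_self_iff.2 (hξ.1 g)]

theorem hasSum_norm_inner_sq (f : H) :
    HasSum (fun g => ‖⟪π g ξ, f⟫‖ ^ 2) (‖M.starProjection f‖ ^ 2) := by
  have htsum := hξ.2 _ (M.starProjection_apply_mem f)
  simp only [norm_inner_symm (M.starProjection f), hξ.inner_starProjection] at htsum
  rw [← htsum]
  refine Summable.hasSum (by_contra fun hns => hns ?_)
  have hf : ‖M.starProjection f‖ ^ 2 = 0 := by rw [← htsum, tsum_eq_zero_of_not_summable hns]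
  simp [← hξ.inner_starProjection f, norm_eq_zero.1 (pow_eq_zero_iff two_ne_zero |>.1 hf)]

def analysisOp : H →L[ℂ] ℓ²(G) :=
  LinearMap.mkContinuous
    { toFun := fun f => ⟨fun g => ⟪π g ξ, f⟫,
        memℓp_gen (by simpa using (hξ.hasSum_norm_inner_sq f).summable)⟩
      map_add' := fun f f' => lp.ext <| funext fun g => inner_add_right _ _ _
      map_smul' := fun c f => lp.ext <| funext fun g => inner_smul_right _ _ _ }
    1 fun f => by
      rw [one_mul, ← sq_le_sq₀ (norm_nonneg _) (norm_nonneg _), lp.norm_sq_eq_tsum]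
      exact (hξ.hasSum_norm_inner_sq f).tsum_eq.trans_le
        (pow_le_pow_left₀ (norm_nonneg _) (M.norm_starProjection_apply_le f) 2)

theorem isAnalysisOp_analysisOp : IsAnalysisOp π ξ hξ.analysisOp := fun _ _ => rfl

theorem norm_analysisOp_apply (f : H) : ‖hξ.analysisOp f‖ = ‖M.starProjection f‖ := by
  rw [← sq_eq_sq₀ (norm_nonneg _) (norm_nonneg _), lp.norm_sq_eq_tsum]
  exact (hξ.hasSum_norm_inner_sq f).tsum_eq

theorem analysisOp_comp_starProjection :
    hξ.analysisOp ∘L M.starProjection = hξ.analysisOp :=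
  ext fun f => lp.ext <| funext fun g => hξ.inner_starProjection f g

variable [CompleteSpace H]

theorem adjoint_analysisOp_comp_analysisOp :
    adjoint hξ.analysisOp ∘L hξ.analysisOp = M.starProjection := by
  rw [adjoint_comp_self_eq_of_norm_eq _ _ hξ.norm_analysisOp_apply,
    (isSelfAdjoint_starProjection M).adjoint_eq]
  exact M.isIdempotentElem_starProjection

theorem adjoint_analysisOp_comp_eq_zero (hξ' : IsParsevalFrameVectorIn π ξ' M')
    (hd : StronglyDisjointPairIn π π ξ ξ' M M') :
    adjoint hξ'.analysisOp ∘L hξ.analysisOp = 0 := by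
  refine ext fun f => ext_inner_left ℂ fun x => ?_
  have h := (hξ.isAnalysisOp_analysisOp.stronglyDisjointPairIn_iff
    hξ'.isAnalysisOp_analysisOp M M').1 hd _ (M.starProjection_apply_mem f) _
    (M'.starProjection_apply_mem x)
  rw [← comp_apply hξ.analysisOp, ← comp_apply hξ'.analysisOp,
    analysisOp_comp_starProjection, analysisOp_comp_starProjection] at h
  rw [comp_apply, adjoint_inner_right, zero_apply, inner_zero_right, ← inner_conj_symm, h,
    map_zero]

end IsParsevalFrameVectorIn

variable [CompleteSpace H]

section Decomposition

variable {π : G →* (H ≃ₗᵢ[ℂ] H)} {ι : Type*} [Fintype ι] {ξ : ι → H}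
  {M : ι → Submodule ℂ H} [∀ i, (M i).HasOrthogonalProjection]
  (hξ : ∀ i, IsParsevalFrameVectorIn π (ξ i) (M i))
  (hdisj : Pairwise fun i j => StronglyDisjointPairIn π π (ξ i) (ξ j) (M i) (M j))
  {u : ι → H →L[ℂ] H}

include hξ

theorem isAnalysisOp_sum_apply (hu : ∀ i, InCommutant π (u i)) :
    IsAnalysisOp π (∑ i, u i (ξ i)) (∑ i, (hξ i).analysisOp ∘L adjoint (u i)) :=
  IsAnalysisOp.sum fun i => (hξ i).isAnalysisOp_analysisOp.comp_adjoint (hu i)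

include hdisj

theorem adjoint_analysisOp_comp_sum (hup : ∀ i, u i ∘L (M i).starProjection = u i) (j : ι) :
    adjoint (hξ j).analysisOp ∘L ∑ i, (hξ i).analysisOp ∘L adjoint (u i) = adjoint (u j) := by
  classical
  rw [comp_finsetSum, Finset.sum_eq_single j]
  · calc _ = adjoint (u j ∘L (M j).starProjection) := by
          rw [← comp_assoc, (hξ j).adjoint_analysisOp_comp_analysisOp, adjoint_comp,
            (isSelfAdjoint_starProjection _).adjoint_eq]
      _ = adjoint (u j) := by rw [hup]
  · intro i _ hij
    rw [← comp_assoc, (hξ i).adjoint_analysisOp_comp_eq_zero (hξ j) (hdisj hij), zero_comp]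
  · simp

theorem adjoint_sum_comp_sum (hup : ∀ i, u i ∘L (M i).starProjection = u i) :
    adjoint (∑ i, (hξ i).analysisOp ∘L adjoint (u i)) ∘L
      ∑ i, (hξ i).analysisOp ∘L adjoint (u i) = ∑ i, u i ∘L adjoint (u i) := by
  rw [map_sum, finsetSum_comp]
  refine Finset.sum_congr rfl fun j _ => ?_
  rw [adjoint_comp, adjoint_adjoint, comp_assoc, adjoint_analysisOp_comp_sum hξ hdisj hup]

theorem isParsevalFrameVector_sum_apply (hu : ∀ i, InCommutant π (u i))
    (hup : ∀ i, u i ∘L (M i).starProjection = u i)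
    (hsum : ∑ i, u i ∘L adjoint (u i) = ContinuousLinearMap.id ℂ H) :
    IsParsevalFrameVector π (∑ i, u i (ξ i)) :=
  (isAnalysisOp_sum_apply hξ hu).isParsevalFrameVector <| by
    rw [adjoint_sum_comp_sum hξ hdisj hup, hsum]
    rfl

theorem eq_of_sum_apply_eq {v : ι → H →L[ℂ] H} (hu : ∀ i, InCommutant π (u i))
    (hup : ∀ i, u i ∘L (M i).starProjection = u i) (hv : ∀ i, InCommutant π (v i))
    (hvp : ∀ i, v i ∘L (M i).starProjection = v i) (h : ∑ i, u i (ξ i) = ∑ i, v i (ξ i)) :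
    u = v := by
  have hA := (isAnalysisOp_sum_apply hξ hu).unique (h ▸ isAnalysisOp_sum_apply hξ hv)
  funext j
  apply adjoint.injective
  rw [← adjoint_analysisOp_comp_sum hξ hdisj hup, hA, adjoint_analysisOp_comp_sum hξ hdisj hvp]

theorem exists_decomposition_of_isParsevalFrameVector
    (hmax : ∀ ζ : H, IsBesselVector π ζ → (∀ i, StronglyDisjointPairIn π π ζ (ξ i) ⊤ (M i)) →
      ζ = 0)
    {η : H} (hη : IsParsevalFrameVector π η) :
    ∃ u : ι → H →L[ℂ] H, (∀ i, InCommutant π (u i)) ∧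
      (∀ i, u i ∘L (M i).starProjection = u i) ∧ η = ∑ i, u i (ξ i) ∧
      ∑ i, u i ∘L adjoint (u i) = ContinuousLinearMap.id ℂ H := by
  set Θη := hη.isParsevalFrameVectorIn_top.analysisOp
  set u := fun i => adjoint Θη ∘L (hξ i).analysisOp
  have hu : ∀ i, InCommutant π (u i) := fun i =>
    (hξ i).isAnalysisOp_analysisOp.inCommutant_adjoint_comp
      hη.isParsevalFrameVectorIn_top.isAnalysisOp_analysisOp
  have hup : ∀ i, u i ∘L (M i).starProjection = u i := fun i => by
    simp only [u, comp_assoc, IsParsevalFrameVectorIn.analysisOp_comp_starProjection]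
  have hζ : IsAnalysisOp π (η - ∑ i, u i (ξ i))
      (Θη - ∑ i, (hξ i).analysisOp ∘L adjoint (u i)) :=
    hη.isParsevalFrameVectorIn_top.isAnalysisOp_analysisOp.sub (isAnalysisOp_sum_apply hξ hu)
  have hperp : ∀ j,
      adjoint (hξ j).analysisOp ∘L (Θη - ∑ i, (hξ i).analysisOp ∘L adjoint (u i)) = 0 :=
    fun j => by
      rw [comp_sub, adjoint_analysisOp_comp_sum hξ hdisj hup, adjoint_comp, adjoint_adjoint,
        sub_self]
  have hζ0 : η - ∑ i, u i (ξ i) = 0 := by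
    refine hmax _ hζ.isBesselVector fun j =>
      (hζ.stronglyDisjointPairIn_iff (hξ j).isAnalysisOp_analysisOp ⊤ (M j)).2
        fun v _ w _ => ?_
    rw [← inner_conj_symm, ← adjoint_inner_right, ← comp_apply, hperp, zero_apply,
      inner_zero_right, map_zero]
  rw [hζ0] at hζ
  have hΘη : Θη = ∑ i, (hξ i).analysisOp ∘L adjoint (u i) :=
    sub_eq_zero.1 (hζ.unique IsAnalysisOp.zero)
  refine ⟨u, hu, hup, sub_eq_zero.1 hζ0, ?_⟩
  rw [← adjoint_sum_comp_sum hξ hdisj hup, ← hΘη,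
    IsParsevalFrameVectorIn.adjoint_analysisOp_comp_analysisOp, Submodule.starProjection_top]

end Decomposition

instance (π : G →* (H ≃ₗᵢ[ℂ] H)) (ξ : H) : (orbitSpan π ξ).HasOrthogonalProjection := by
  unfold orbitSpan
  infer_instance

theorem stmt9_general {G : Type*} [Group G]
    {H : Type*} [NormedAddCommGroup H] [InnerProductSpace ℂ H] [CompleteSpace H]
    (π : G →* (H ≃ₗᵢ[ℂ] H)) (N : ℕ) (ξ : Fin (N + 1) → H)
    (hξ : ∀ i, IsParsevalFrameVectorIn π (ξ i) (orbitSpan π (ξ i)))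
    (p : Fin (N + 1) → (H →L[ℂ] H))
    (hp : ∀ i, IsOrthoProjOnto (orbitSpan π (ξ i)) (p i))
    (hdisj : ∀ i j, i ≠ j → StronglyDisjointPairIn π π (ξ i) (ξ j)
      (orbitSpan π (ξ i)) (orbitSpan π (ξ j)))
    (hmax : ∀ ζ : H, IsBesselVector π ζ →
      (∀ i, StronglyDisjointPairIn π π ζ (ξ i) ⊤ (orbitSpan π (ξ i))) → ζ = 0)
    (η : H) :
    (IsParsevalFrameVector π η ↔
      ∃ u : Fin (N + 1) → (H →L[ℂ] H),
        (∀ i, InCommutant π (u i)) ∧ (∀ i, (u i) ∘L (p i) = u i) ∧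
        η = ∑ i, u i (ξ i) ∧
        ∑ i, (u i) ∘L (ContinuousLinearMap.adjoint (u i)) = ContinuousLinearMap.id ℂ H) ∧
    (∀ u v : Fin (N + 1) → (H →L[ℂ] H),
      ((∀ i, InCommutant π (u i)) ∧ (∀ i, (u i) ∘L (p i) = u i) ∧
        η = ∑ i, u i (ξ i) ∧
        ∑ i, (u i) ∘L (ContinuousLinearMap.adjoint (u i)) = ContinuousLinearMap.id ℂ H) →
      ((∀ i, InCommutant π (v i)) ∧ (∀ i, (v i) ∘L (p i) = v i) ∧
        η = ∑ i, v i (ξ i) ∧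
        ∑ i, (v i) ∘L (ContinuousLinearMap.adjoint (v i)) = ContinuousLinearMap.id ℂ H) →
      u = v) := by
  obtain rfl : p = fun i => (orbitSpan π (ξ i)).starProjection :=
    funext fun i => (hp i).eq_starProjection
  have hdisj' : Pairwise fun i j => StronglyDisjointPairIn π π (ξ i) (ξ j)
      (orbitSpan π (ξ i)) (orbitSpan π (ξ j)) := fun i j hij => hdisj i j hij
  refine ⟨⟨exists_decomposition_of_isParsevalFrameVector hξ hdisj' hmax, ?_⟩, ?_⟩
  · rintro ⟨u, hu, hup, rfl, hsum⟩
    exact isParsevalFrameVector_sum_apply hξ hdisj' hu hup hsum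
  · rintro u v ⟨hu, hup, rfl, -⟩ ⟨hv, hvp, h, -⟩
    exact eq_of_sum_apply_eq hξ hdisj' hu hup hv hvp h

theorem stmt9 {G : Type*} [Group G] [Countable G]
    {H : Type*} [NormedAddCommGroup H] [InnerProductSpace ℂ H] [CompleteSpace H]
    (π : G →* (H ≃ₗᵢ[ℂ] H)) (N : ℕ) (ξ : Fin (N + 1) → H)
    (hξ0 : IsParsevalFrameVector π (ξ 0))
    (hξ : ∀ i, IsParsevalFrameVectorIn π (ξ i) (orbitSpan π (ξ i)))
    (p : Fin (N + 1) → (H →L[ℂ] H))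
    (hp : ∀ i, IsOrthoProjOnto (orbitSpan π (ξ i)) (p i))
    (hdisj : ∀ i j, i ≠ j → StronglyDisjointPairIn π π (ξ i) (ξ j)
      (orbitSpan π (ξ i)) (orbitSpan π (ξ j)))
    (hmax : ∀ ζ : H, IsBesselVector π ζ →
      (∀ i, StronglyDisjointPairIn π π ζ (ξ i) ⊤ (orbitSpan π (ξ i))) → ζ = 0)
    (η : H) :
    (IsParsevalFrameVector π η ↔
      ∃ u : Fin (N + 1) → (H →L[ℂ] H),
        (∀ i, InCommutant π (u i)) ∧ (∀ i, (u i) ∘L (p i) = u i) ∧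
        η = ∑ i, u i (ξ i) ∧
        ∑ i, (u i) ∘L (ContinuousLinearMap.adjoint (u i)) = ContinuousLinearMap.id ℂ H) ∧
    (∀ u v : Fin (N + 1) → (H →L[ℂ] H),
      ((∀ i, InCommutant π (u i)) ∧ (∀ i, (u i) ∘L (p i) = u i) ∧
        η = ∑ i, u i (ξ i) ∧
        ∑ i, (u i) ∘L (ContinuousLinearMap.adjoint (u i)) = ContinuousLinearMap.id ℂ H) →
      ((∀ i, InCommutant π (v i)) ∧ (∀ i, (v i) ∘L (p i) = v i) ∧
        η = ∑ i, v i (ξ i) ∧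
        ∑ i, (v i) ∘L (ContinuousLinearMap.adjoint (v i)) = ContinuousLinearMap.id ℂ H) →
      u = v) :=
  stmt9_general π N ξ hξ p hp hdisj hmax η
end
end

section
/- Let G be a countable group, π a unitary representation of G on a complex Hilbert space H, and N ∈ ℕ. Assume ξ₁ is a Parseval frame vector for H, and ξ₂,…,ξ_{N+1} ∈ H are such that each ξᵢ is a Parseval frame vector for Mᵢ := closure(span{π(g)ξᵢ : g ∈ G}) (with pᵢ' the orthogonal projection of H onto Mᵢ), the vectors ξ₁,…,ξ_{N+1} are mutually strongly disjoint, and there is no nonzero Bessel vector strongly disjoint from all ξᵢ. Let η = u₁'ξ₁ + ⋯ + u_{N+1}'ξ_{N+1} and ζ = v₁'ξ₁ + ⋯ + v_{N+1}'ξ_{N+1} be Parseval frame vectors for H, with uᵢ', vᵢ' ∈ π(G)', uᵢ'pᵢ' = uᵢ', vᵢ'pᵢ' = vᵢ', ∑ᵢ uᵢ'(uᵢ')* = id_H and ∑ᵢ vᵢ'(vᵢ')* = id_H. Then: (a) η and ζ are strongly disjoint if and only if v₁'(u₁')* + ⋯ + v_{N+1}'(u_{N+1}')* = 0; (b) η and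 ζ are unitarily equivalent if and only if (uᵢ')*uⱼ' = (vᵢ')*vⱼ' for all i, j. -/
noncomputable section

open scoped ComplexConjugate

local notation "⟪" x ", " y "⟫" => @inner ℂ _ _ x y

variable {G : Type*} [Group G]
variable {H : Type*} [NormedAddCommGroup H] [InnerProductSpace ℂ H]

/-!
Since each `uᵢ'` commutes with `π` and factors through `pᵢ'`, the frame coefficients of `η`
split as `⟪f, π g η⟫ = ∑ᵢ ⟪uᵢ'* f, π g ξᵢ⟫` with `uᵢ'* f ∈ Mᵢ`. Polarizing the Parseval identity
of each `ξᵢ` on `Mᵢ` and using the strong disjointness of the `ξᵢ`, the mixed frame sums become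
`∑_g ⟪f, π g η⟫ conj ⟪f', π g ζ⟫ = ⟪f, ∑ᵢ uᵢ' vᵢ'* f'⟫`, which is (a).
For (b), pairing an intertwining unitary `U` against the frame of `Mⱼ` gives `vⱼ' = U uⱼ'`, hence
`uᵢ'* uⱼ' = vᵢ'* vⱼ'`. Conversely, these relations make `W = ∑ᵢ vᵢ' uᵢ'*` a unitary of `π(G)'`
with `W uⱼ' = vⱼ'`, so `W η = ζ`.
-/

open scoped InnerProductSpace

section ParsevalFrame

variable {ι 𝕜 E : Type*} [RCLike 𝕜] [NormedAddCommGroup E] [InnerProductSpace 𝕜 E]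
  {e : ι → E} {M : Submodule 𝕜 E} (hP : ∀ f ∈ M, ∑' i, ‖⟪f, e i⟫_𝕜‖ ^ 2 = ‖f‖ ^ 2)
include hP

theorem summable_norm_inner_sq_of_parseval {x : E} (hx : x ∈ M) :
    Summable fun i => ‖⟪x, e i⟫_𝕜‖ ^ 2 := by
  by_contra h
  have hx0 : x = 0 := by
    simpa [tsum_eq_zero_of_not_summable h, eq_comm (a := (0 : ℝ))] using hP x hx
  simp [hx0] at h

theorem memℓp_inner_of_parseval {x : E} (hx : x ∈ M) : Memℓp (fun i => ⟪e i, x⟫_𝕜) 2 :=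
  memℓp_gen <| by
    simpa only [ENNReal.toReal_ofNat, Real.rpow_two, norm_inner_symm]
      using summable_norm_inner_sq_of_parseval hP hx

def analysisOp : M →ₗ[𝕜] lp (fun _ : ι => 𝕜) 2 where
  toFun x := ⟨fun i => ⟪e i, x⟫_𝕜, memℓp_inner_of_parseval hP x.2⟩
  map_add' _ _ := lp.ext <| funext fun _ => inner_add_right _ _ _
  map_smul' _ _ := lp.ext <| funext fun _ => inner_smul_right _ _ _

theorem norm_analysisOp (x : M) :
    ‖analysisOp hP x‖ = ‖x‖ := by
  have h := lp.norm_rpow_eq_tsum (p := 2) (by norm_num) (analysisOp hP x)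
  simp only [ENNReal.toReal_ofNat, Real.rpow_two] at h
  refine (sq_eq_sq₀ (norm_nonneg _) (norm_nonneg _)).mp ?_
  rw [h, Submodule.coe_norm, ← hP x x.2]
  exact tsum_congr fun i => congrArg (· ^ 2) (norm_inner_symm _ _)

theorem hasSum_inner_mul_conj_inner_of_parseval {x y : E} (hx : x ∈ M) (hy : y ∈ M) :
    HasSum (fun i => ⟪x, e i⟫_𝕜 * conj ⟪y, e i⟫_𝕜) ⟪x, y⟫_𝕜 := by
  have h := lp.hasSum_inner (𝕜 := 𝕜) (analysisOp hP ⟨x, hx⟩) (analysisOp hP ⟨y, hy⟩)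
  rw [(LinearMap.norm_map_iff_inner_map_map (analysisOp hP)).mp
    (norm_analysisOp hP)] at h
  simpa [analysisOp, inner_conj_symm, mul_comm] using h

theorem summable_inner_mul_conj_inner_of_parseval {e' : ι → E} {M' : Submodule 𝕜 E}
    (hP' : ∀ f ∈ M', ∑' i, ‖⟪f, e' i⟫_𝕜‖ ^ 2 = ‖f‖ ^ 2) {x y : E} (hx : x ∈ M) (hy : y ∈ M') :
    Summable fun i => ⟪x, e i⟫_𝕜 * conj ⟪y, e' i⟫_𝕜 := by
  have h := lp.summable_inner (𝕜 := 𝕜) (analysisOp hP ⟨x, hx⟩) (analysisOp hP' ⟨y, hy⟩)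
  simpa [analysisOp, inner_conj_symm, mul_comm] using h

end ParsevalFrame

section StarRing

variable {R ι : Type*} [Ring R] [StarRing R] [Fintype ι] {u v : ι → R}

theorem sum_mul_star_mul_eq (hv : ∑ i, v i * star (v i) = 1)
    (h : ∀ i j, star (u i) * u j = star (v i) * v j) (j : ι) :
    (∑ i, v i * star (u i)) * u j = v j := by
  calc (∑ i, v i * star (u i)) * u j = (∑ i, v i * star (v i)) * v j := by
        simp only [Finset.sum_mul, mul_assoc, h]
    _ = v j := by rw [hv, one_mul]

theorem sum_mul_star_mem_unitary (hu : ∑ i, u i * star (u i) = 1)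
    (hv : ∑ i, v i * star (v i) = 1) (h : ∀ i j, star (u i) * u j = star (v i) * v j) :
    ∑ i, v i * star (u i) ∈ unitary R := by
  have hstar : star (∑ i, v i * star (u i)) = ∑ i, u i * star (v i) := by
    simp only [star_sum, star_mul, star_star]
  refine Unitary.mem_iff.mpr ⟨?_, ?_⟩
  · rw [hstar, Finset.mul_sum]
    simp only [← mul_assoc, sum_mul_star_mul_eq hu (fun i j => (h i j).symm), hu]
  · rw [hstar, Finset.mul_sum]
    simp only [← mul_assoc, sum_mul_star_mul_eq hv h, hv]

end StarRing

section Representation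

variable {π : G →* (H ≃ₗᵢ[ℂ] H)}

open ContinuousLinearMap

theorem inner_map_eq_inner_inv_map (π : G →* (H ≃ₗᵢ[ℂ] H)) (g : G) (x y : H) :
    ⟪x, π g y⟫ = ⟪π g⁻¹ x, y⟫ := by
  rw [(π g⁻¹).inner_map_eq_flip, ← LinearIsometryEquiv.inv_def, ← map_inv, inv_inv]

theorem InCommutant.comp {a b : H →L[ℂ] H} (ha : InCommutant π a) (hb : InCommutant π b) :
    InCommutant π (a ∘L b) := fun g x => by
  rw [comp_apply, comp_apply, hb, ha]

theorem InCommutant.sum {ι : Type*} (s : Finset ι) {a : ι → H →L[ℂ] H}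
    (ha : ∀ i ∈ s, InCommutant π (a i)) : InCommutant π (∑ i ∈ s, a i) := fun g x => by
  simp only [sum_apply, map_sum]
  exact Finset.sum_congr rfl fun i hi => ha i hi g x

variable [CompleteSpace H]

theorem inner_map_synthesis_eq_sum_inner_adjoint {ι : Type*} [Fintype ι] {b : ι → H →L[ℂ] H}
    (hb : ∀ i, InCommutant π (b i)) (ξ : ι → H) (f : H) (g : G) :
    ⟪f, π g (∑ i, b i (ξ i))⟫ = ∑ i, ⟪adjoint (b i) f, π g (ξ i)⟫ := by
  simp only [map_sum, inner_sum, ← hb _ g, adjoint_inner_left]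

theorem InCommutant.adjoint {a : H →L[ℂ] H} (ha : InCommutant π a) :
    InCommutant π (adjoint a) := fun g x =>
  ext_inner_left ℂ fun w => by
    rw [adjoint_inner_right, inner_map_eq_inner_inv_map, ← ha, ← adjoint_inner_right,
      ← inner_map_eq_inner_inv_map]

theorem IsOrthoProjOnto.adjoint_eq {M : Submodule ℂ H} {p : H →L[ℂ] H}
    (hp : IsOrthoProjOnto M p) : adjoint p = p := by
  have : M.HasOrthogonalProjection := ⟨fun x => ⟨p x, hp x⟩⟩
  have hpM : p = M.starProjection :=
    ext fun x => (M.eq_starProjection_of_mem_orthogonal (hp x).1 (hp x).2).symm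
  rw [hpM]
  exact isSelfAdjoint_starProjection M

theorem IsOrthoProjOnto.adjoint_apply_mem {M : Submodule ℂ H} {p a : H →L[ℂ] H}
    (hp : IsOrthoProjOnto M p) (hap : a ∘L p = a) (f : H) : adjoint a f ∈ M := by
  have h : adjoint a = p ∘L adjoint a := by
    conv_lhs => rw [← hap, adjoint_comp, hp.adjoint_eq]
  rw [h]
  exact (hp _).1

theorem exists_intertwiner_of_adjoint_comp_eq {ι : Type*} [Fintype ι] {u v : ι → H →L[ℂ] H}
    (hu : ∀ i, InCommutant π (u i)) (hv : ∀ i, InCommutant π (v i))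
    (husum : ∑ i, u i ∘L adjoint (u i) = ContinuousLinearMap.id ℂ H)
    (hvsum : ∑ i, v i ∘L adjoint (v i) = ContinuousLinearMap.id ℂ H)
    (h : ∀ i j, adjoint (u i) ∘L u j = adjoint (v i) ∘L v j) (ξ : ι → H) :
    ∃ U : H ≃ₗᵢ[ℂ] H, ∀ g, U (π g (∑ i, u i (ξ i))) = π g (∑ i, v i (ξ i)) := by
  simp only [← mul_def, ← star_eq_adjoint, ← one_def] at husum hvsum h
  have hW : InCommutant π (∑ i, v i * star (u i)) :=
    InCommutant.sum _ fun i _ => (hv i).comp (hu i).adjoint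
  refine ⟨Unitary.linearIsometryEquiv ⟨_, sum_mul_star_mem_unitary husum hvsum h⟩, fun g => ?_⟩
  change (∑ i, v i * star (u i)) (π g _) = _
  rw [hW, map_sum]
  simp only [← mul_apply_eq_comp, sum_mul_star_mul_eq hvsum h]

end Representation

section Synthesis

open ContinuousLinearMap

variable [CompleteSpace H] {π : G →* (H ≃ₗᵢ[ℂ] H)} {ι : Type*} [Fintype ι]
  {ξ : ι → H} {M : ι → Submodule ℂ H} {p : ι → H →L[ℂ] H}
  (hξ : ∀ i, IsParsevalFrameVectorIn π (ξ i) (M i)) (hp : ∀ i, IsOrthoProjOnto (M i) (p i))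
  (hdisj : ∀ i j, i ≠ j → StronglyDisjointPairIn π π (ξ i) (ξ j) (M i) (M j))
include hξ hp hdisj

theorem hasSum_inner_synthesis_mul_conj {b : ι → H →L[ℂ] H} (hb : ∀ i, InCommutant π (b i))
    (hbp : ∀ i, b i ∘L p i = b i) (f : H) {j : ι} {x : H} (hx : x ∈ M j) :
    HasSum (fun g => ⟪f, π g (∑ i, b i (ξ i))⟫ * conj ⟪x, π g (ξ j)⟫) ⟪f, b j x⟫ := by
  classical
  have hmem : ∀ i, adjoint (b i) f ∈ M i := fun i => (hp i).adjoint_apply_mem (hbp i) f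
  have hterm : ∀ i, HasSum (fun g => ⟪adjoint (b i) f, π g (ξ i)⟫ * conj ⟪x, π g (ξ j)⟫)
      (if i = j then ⟪f, b j x⟫ else 0) := by
    intro i
    split_ifs with hij
    · subst hij
      rw [← adjoint_inner_left]
      exact hasSum_inner_mul_conj_inner_of_parseval (hξ i).2 (hmem i) hx
    · rw [← hdisj i j hij _ (hmem i) x hx]
      exact (summable_inner_mul_conj_inner_of_parseval (hξ i).2 (hξ j).2 (hmem i) hx).hasSum
  simp only [inner_map_synthesis_eq_sum_inner_adjoint hb, Finset.sum_mul]
  simpa using hasSum_sum (s := Finset.univ) fun i _ => hterm i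

theorem hasSum_inner_synthesis_mul_conj_synthesis {a b : ι → H →L[ℂ] H}
    (ha : ∀ i, InCommutant π (a i)) (hb : ∀ i, InCommutant π (b i))
    (hap : ∀ i, a i ∘L p i = a i) (hbp : ∀ i, b i ∘L p i = b i) (f f' : H) :
    HasSum (fun g => ⟪f, π g (∑ i, a i (ξ i))⟫ * conj ⟪f', π g (∑ i, b i (ξ i))⟫)
      ⟪f, (∑ i, a i ∘L adjoint (b i)) f'⟫ := by
  have hval : ⟪f, (∑ i, a i ∘L adjoint (b i)) f'⟫ = ∑ i, ⟪f, a i (adjoint (b i) f')⟫ := by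
    simp only [sum_apply, comp_apply, inner_sum]
  simp only [hval, inner_map_synthesis_eq_sum_inner_adjoint hb _ f', map_sum (starRingEnd ℂ),
    Finset.mul_sum]
  exact hasSum_sum fun i _ => hasSum_inner_synthesis_mul_conj hξ hp hdisj ha hap f
    ((hp i).adjoint_apply_mem (hbp i) f')

theorem stronglyDisjointPairIn_synthesis_iff {u v : ι → H →L[ℂ] H}
    (hu : ∀ i, InCommutant π (u i)) (hv : ∀ i, InCommutant π (v i))
    (hup : ∀ i, u i ∘L p i = u i) (hvp : ∀ i, v i ∘L p i = v i) :
    StronglyDisjointPairIn π π (∑ i, u i (ξ i)) (∑ i, v i (ξ i)) ⊤ ⊤ ↔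
      ∑ i, v i ∘L adjoint (u i) = 0 := by
  have hadj : adjoint (∑ i, u i ∘L adjoint (v i)) = ∑ i, v i ∘L adjoint (u i) := by
    simp only [map_sum, adjoint_comp, adjoint_adjoint]
  rw [← hadj, LinearIsometryEquiv.map_eq_zero_iff]
  simp only [StronglyDisjointPairIn, Submodule.mem_top, true_implies,
    (hasSum_inner_synthesis_mul_conj_synthesis hξ hp hdisj hu hv hup hvp _ _).tsum_eq]
  constructor
  · intro h
    ext f'
    exact inner_self_eq_zero.mp (h _ f')
  · rintro h f f'
    simp [h]

theorem eq_comp_of_intertwines {u v : ι → H →L[ℂ] H}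
    (hu : ∀ i, InCommutant π (u i)) (hv : ∀ i, InCommutant π (v i))
    (hup : ∀ i, u i ∘L p i = u i) (hvp : ∀ i, v i ∘L p i = v i) (U : H ≃ₗᵢ[ℂ] H)
    (hU : ∀ g, U (π g (∑ i, u i (ξ i))) = π g (∑ i, v i (ξ i))) (j : ι) :
    v j = (U : H →L[ℂ] H) ∘L u j := by
  have hM : ∀ x ∈ M j, v j x = U (u j x) := by
    intro x hx
    refine ext_inner_left ℂ fun f => ?_
    have hv' := hasSum_inner_synthesis_mul_conj hξ hp hdisj hv hvp f hx
    have hu' := hasSum_inner_synthesis_mul_conj hξ hp hdisj hu hup (U.symm f) hx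
    simp only [← hU, U.symm.inner_map_eq_flip, LinearIsometryEquiv.symm_symm] at hv' hu'
    exact hv'.unique hu'
  ext x
  calc v j x = v j (p j x) := by rw [← comp_apply, hvp]
    _ = U (u j (p j x)) := hM _ (hp j x).1
    _ = U (u j x) := by rw [← comp_apply (u j), hup]

theorem adjoint_comp_eq_of_intertwines {u v : ι → H →L[ℂ] H}
    (hu : ∀ i, InCommutant π (u i)) (hv : ∀ i, InCommutant π (v i))
    (hup : ∀ i, u i ∘L p i = u i) (hvp : ∀ i, v i ∘L p i = v i) (U : H ≃ₗᵢ[ℂ] H)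
    (hU : ∀ g, U (π g (∑ i, u i (ξ i))) = π g (∑ i, v i (ξ i))) (i j : ι) :
    adjoint (u i) ∘L u j = adjoint (v i) ∘L v j := by
  rw [eq_comp_of_intertwines hξ hp hdisj hu hv hup hvp U hU i,
    eq_comp_of_intertwines hξ hp hdisj hu hv hup hvp U hU j, adjoint_comp, comp_assoc,
    ← comp_assoc _ _ (u j), (norm_map_iff_adjoint_comp_self _).mp U.norm_map, one_def, id_comp]

end Synthesis

theorem stmt10_general {G : Type*} [Group G]
    {H : Type*} [NormedAddCommGroup H] [InnerProductSpace ℂ H] [CompleteSpace H]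
    (π : G →* (H ≃ₗᵢ[ℂ] H)) (N : ℕ) (ξ : Fin (N + 1) → H)
    (hξ : ∀ i, IsParsevalFrameVectorIn π (ξ i) (orbitSpan π (ξ i)))
    (p : Fin (N + 1) → (H →L[ℂ] H))
    (hp : ∀ i, IsOrthoProjOnto (orbitSpan π (ξ i)) (p i))
    (hdisj : ∀ i j, i ≠ j → StronglyDisjointPairIn π π (ξ i) (ξ j)
      (orbitSpan π (ξ i)) (orbitSpan π (ξ j)))
    (η ζ : H)
    (u v : Fin (N + 1) → (H →L[ℂ] H))
    (hu : ∀ i, InCommutant π (u i)) (hv : ∀ i, InCommutant π (v i))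
    (hup : ∀ i, (u i) ∘L (p i) = u i) (hvp : ∀ i, (v i) ∘L (p i) = v i)
    (husum : ∑ i, (u i) ∘L (ContinuousLinearMap.adjoint (u i)) = ContinuousLinearMap.id ℂ H)
    (hvsum : ∑ i, (v i) ∘L (ContinuousLinearMap.adjoint (v i)) = ContinuousLinearMap.id ℂ H)
    (hηdec : η = ∑ i, u i (ξ i)) (hζdec : ζ = ∑ i, v i (ξ i)) :
    (StronglyDisjointPairIn π π η ζ ⊤ ⊤ ↔
      ∑ i, (v i) ∘L (ContinuousLinearMap.adjoint (u i)) = 0) ∧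
    ((∃ U : H ≃ₗᵢ[ℂ] H, ∀ g : G, U (π g η) = π g ζ) ↔
      ∀ i j, (ContinuousLinearMap.adjoint (u i)) ∘L (u j) =
        (ContinuousLinearMap.adjoint (v i)) ∘L (v j)) := by
  subst hηdec hζdec
  refine ⟨stronglyDisjointPairIn_synthesis_iff hξ hp hdisj hu hv hup hvp, ?_, ?_⟩
  · rintro ⟨U, hU⟩
    exact adjoint_comp_eq_of_intertwines hξ hp hdisj hu hv hup hvp U hU
  · intro h
    exact exists_intertwiner_of_adjoint_comp_eq hu hv husum hvsum h ξ

theorem stmt10 {G : Type*} [Group G] [Countable G]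
    {H : Type*} [NormedAddCommGroup H] [InnerProductSpace ℂ H] [CompleteSpace H]
    (π : G →* (H ≃ₗᵢ[ℂ] H)) (N : ℕ) (ξ : Fin (N + 1) → H)
    (hξ0 : IsParsevalFrameVector π (ξ 0))
    (hξ : ∀ i, IsParsevalFrameVectorIn π (ξ i) (orbitSpan π (ξ i)))
    (p : Fin (N + 1) → (H →L[ℂ] H))
    (hp : ∀ i, IsOrthoProjOnto (orbitSpan π (ξ i)) (p i))
    (hdisj : ∀ i j, i ≠ j → StronglyDisjointPairIn π π (ξ i) (ξ j)
      (orbitSpan π (ξ i)) (orbitSpan π (ξ j)))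
    (hmax : ∀ ζ : H, IsBesselVector π ζ →
      (∀ i, StronglyDisjointPairIn π π ζ (ξ i) ⊤ (orbitSpan π (ξ i))) → ζ = 0)
    (η ζ : H) (hη : IsParsevalFrameVector π η) (hζ : IsParsevalFrameVector π ζ)
    (u v : Fin (N + 1) → (H →L[ℂ] H))
    (hu : ∀ i, InCommutant π (u i)) (hv : ∀ i, InCommutant π (v i))
    (hup : ∀ i, (u i) ∘L (p i) = u i) (hvp : ∀ i, (v i) ∘L (p i) = v i)
    (husum : ∑ i, (u i) ∘L (ContinuousLinearMap.adjoint (u i)) = ContinuousLinearMap.id ℂ H)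
    (hvsum : ∑ i, (v i) ∘L (ContinuousLinearMap.adjoint (v i)) = ContinuousLinearMap.id ℂ H)
    (hηdec : η = ∑ i, u i (ξ i)) (hζdec : ζ = ∑ i, v i (ξ i)) :
    (StronglyDisjointPairIn π π η ζ ⊤ ⊤ ↔
      ∑ i, (v i) ∘L (ContinuousLinearMap.adjoint (u i)) = 0) ∧
    ((∃ U : H ≃ₗᵢ[ℂ] H, ∀ g : G, U (π g η) = π g ζ) ↔
      ∀ i j, (ContinuousLinearMap.adjoint (u i)) ∘L (u j) =
        (ContinuousLinearMap.adjoint (v i)) ∘L (v j)) :=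
  stmt10_general π N ξ hξ p hp hdisj η ζ u v hu hv hup hvp husum hvsum hηdec hζdec
end
end

section
/- Let G be a countable group, K a subgroup of G of finite index N, and π a unitary representation of G on a complex Hilbert space H. Suppose η₁ and η₂ are strongly disjoint Parseval frame vectors for H such that {√N · π(h)η₁ : h ∈ K} and {√N · π(h)η₂ : h ∈ K} are both orthonormal bases for H. Let α, β ∈ ℂ with |α|² + |β|² = 1 and |α| ≠ |β|. Then η := αη₁ + βη₂ is a Parseval frame vector for H, and the family {π(h)η : h ∈ K} is a Riesz basis for H. -/
noncomputable section

open scoped ComplexConjugate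

local notation "⟪" x ", " y "⟫" => @inner ℂ _ _ x y

variable {G : Type*} [Group G]
variable {H : Type*} [NormedAddCommGroup H] [InnerProductSpace ℂ H]

/-! The cross terms of `‖⟪f, π g (α • η₁ + β • η₂)⟫‖ ^ 2` sum to zero by strong disjointness, so
`α • η₁ + β • η₂` is again a Parseval frame vector. For the Riesz basis, let `U` be the unitary
carrying the orthonormal basis `√N • π h η₁` to `√N • π h η₂`; then `π h (α • η₁ + β • η₂)` is the
image of `√N • π h η₁` under `(α • 1 + β • U) / √N`, which is invertible because the spectrum of
`U` lies on the unit circle while `‖α‖ ≠ ‖β‖`. -/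

lemma Complex.sq_norm_mul_add_mul (α β a b : ℂ) :
    ‖α * a + β * b‖ ^ 2 =
      ‖α‖ ^ 2 * ‖a‖ ^ 2 + ‖β‖ ^ 2 * ‖b‖ ^ 2 + 2 * (α * conj β * (a * conj b)).re := by
  simp only [Complex.sq_norm, Complex.normSq_add, map_mul]
  ring_nf

lemma Complex.summable_mul_conj_of_summable_sq {ι : Type*} {a b : ι → ℂ}
    (ha : Summable fun i => ‖a i‖ ^ 2) (hb : Summable fun i => ‖b i‖ ^ 2) :
    Summable fun i => a i * conj (b i) := by
  refine Summable.of_norm_bounded (ha.add hb) fun i => ?_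
  rw [norm_mul, Complex.norm_conj]
  nlinarith [two_mul_le_add_sq ‖a i‖ ‖b i‖, norm_nonneg (a i), norm_nonneg (b i)]

lemma isUnit_smul_one_add_smul_of_mem_unitary {𝕜 E : Type*} [NormedField 𝕜] [NormedRing E]
    [StarRing E] [CStarRing E] [NormedAlgebra 𝕜 E] [CompleteSpace E] {u : E}
    (hu : u ∈ unitary E) {α β : 𝕜} (h : ‖α‖ ≠ ‖β‖) : IsUnit (α • 1 + β • u) := by
  rcases eq_or_ne β 0 with rfl | hβ
  · have hα : α ≠ 0 := by rintro rfl; simp at h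
    simpa [Algebra.algebraMap_eq_smul_one] using (isUnit_iff_ne_zero.2 hα).map (algebraMap 𝕜 E)
  · have hz : -α / β ∉ spectrum 𝕜 u := fun hz => h <| by
      have := spectrum.norm_eq_one_of_unitary hu hz
      rwa [norm_div, norm_neg, div_eq_one_iff_eq (norm_ne_zero_iff.2 hβ)] at this
    rw [spectrum.mem_iff, not_not] at hz
    have hfac : α • 1 + β • u = (-β) • (algebraMap 𝕜 E (-α / β) - u) := by
      rw [Algebra.algebraMap_eq_smul_one, smul_sub, smul_smul, neg_mul, mul_div_cancel₀ _ hβ]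
      simp
    rw [hfac, Algebra.smul_def]
    exact ((isUnit_iff_ne_zero.2 (neg_ne_zero.2 hβ)).map _).mul hz

theorem HilbertBasis.exists_continuousLinearEquiv_apply_eq_smul_add_smul {ι 𝕜 E : Type*}
    [RCLike 𝕜] [NormedAddCommGroup E] [InnerProductSpace 𝕜 E] [CompleteSpace E]
    (b₁ b₂ : HilbertBasis ι 𝕜 E) {α β : 𝕜} (h : ‖α‖ ≠ ‖β‖) :
    ∃ T : E ≃L[𝕜] E, ∀ i, T (b₁ i) = α • b₁ i + β • b₂ i := by
  classical
  let U : E ≃ₗᵢ[𝕜] E := b₁.repr.trans b₂.repr.symm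
  have hU : ∀ i, U (b₁ i) = b₂ i := fun i => by simp [U, HilbertBasis.repr_self]
  let u := Unitary.linearIsometryEquiv.symm U
  have hunit := isUnit_smul_one_add_smul_of_mem_unitary u.2 h
  refine ⟨ContinuousLinearEquiv.unitsEquiv 𝕜 E hunit.unit, fun i => ?_⟩
  simp [u, hU]

section
variable {π : G →* (H ≃ₗᵢ[ℂ] H)} {ξ ζ : H}

theorem IsParsevalFrameVector.hasSum (hξ : IsParsevalFrameVector π ξ) (f : H) :
    HasSum (fun g => ‖⟪f, π g ξ⟫‖ ^ 2) (‖f‖ ^ 2) := by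
  refine (Summable.hasSum_iff ?_).2 (hξ f)
  by_contra hs
  have hf : f = 0 := by
    have := hξ f
    rw [tsum_eq_zero_of_not_summable hs] at this
    simpa using this.symm
  simp [hf] at hs

theorem IsParsevalFrameVector.smul_add_smul (hξ : IsParsevalFrameVector π ξ)
    (hζ : IsParsevalFrameVector π ζ) (hdisj : StronglyDisjointPairIn π π ξ ζ ⊤ ⊤) {α β : ℂ}
    (hαβ : ‖α‖ ^ 2 + ‖β‖ ^ 2 = 1) : IsParsevalFrameVector π (α • ξ + β • ζ) := by
  intro f
  have hcross : HasSum (fun g => ⟪f, π g ξ⟫ * conj ⟪f, π g ζ⟫) 0 :=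
    (Complex.summable_mul_conj_of_summable_sq (hξ.hasSum f).summable
      (hζ.hasSum f).summable).hasSum_iff.2 (hdisj f trivial f trivial)
  have hsum := (((hξ.hasSum f).mul_left (‖α‖ ^ 2)).add ((hζ.hasSum f).mul_left (‖β‖ ^ 2))).add
    ((Complex.hasSum_re (hcross.mul_left (α * conj β))).mul_left 2)
  convert hsum.tsum_eq using 1
  · refine tsum_congr fun g => ?_
    rw [map_add, map_smul, map_smul, inner_add_right, inner_smul_right, inner_smul_right,
      Complex.sq_norm_mul_add_mul]
  · simp only [mul_zero, Complex.zero_re]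
    linear_combination -(‖f‖ ^ 2 * hαβ)

end

theorem stmt17_general {G : Type*} [Group G]
    {H : Type*} [NormedAddCommGroup H] [InnerProductSpace ℂ H] [CompleteSpace H]
    (π : G →* (H ≃ₗᵢ[ℂ] H)) (K : Subgroup G) (N : ℕ) (hN : 0 < N)
    (η₁ η₂ : H)
    (h1 : IsParsevalFrameVector π η₁) (h2 : IsParsevalFrameVector π η₂)
    (hdisj : StronglyDisjointPairIn π π η₁ η₂ ⊤ ⊤)
    (hON1 : Orthonormal ℂ (fun h : K => (Real.sqrt N : ℂ) • π (h : G) η₁))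
    (hd1 : (Submodule.span ℂ (Set.range fun h : K => π (h : G) η₁)).topologicalClosure = ⊤)
    (hON2 : Orthonormal ℂ (fun h : K => (Real.sqrt N : ℂ) • π (h : G) η₂))
    (hd2 : (Submodule.span ℂ (Set.range fun h : K => π (h : G) η₂)).topologicalClosure = ⊤)
    (α β : ℂ) (hab : ‖α‖ ^ 2 + ‖β‖ ^ 2 = 1) (hne : ‖α‖ ≠ ‖β‖) :
    IsParsevalFrameVector π (α • η₁ + β • η₂) ∧
    ∃ (e : K → H) (T : H ≃L[ℂ] H), Orthonormal ℂ e ∧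
      (Submodule.span ℂ (Set.range e)).topologicalClosure = ⊤ ∧
      ∀ h : K, π (h : G) (α • η₁ + β • η₂) = T (e h) := by
  refine ⟨h1.smul_add_smul h2 hdisj hab, ?_⟩
  set s : ℂ := (Real.sqrt N : ℂ)
  have hs : s ≠ 0 := by simpa [s] using hN.ne'
  have hdense : ∀ η : H,
      (Submodule.span ℂ (Set.range fun h : K => π (h : G) η)).topologicalClosure = ⊤ →
        ⊤ ≤ (Submodule.span ℂ (Set.range fun h : K => s • π (h : G) η)).topologicalClosure :=
    fun η hη => by
      rw [← Set.smul_set_range, Submodule.span_smul_eq_of_isUnit _ _ (isUnit_iff_ne_zero.2 hs), hη]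
  let b₁ := HilbertBasis.mk hON1 (hdense η₁ hd1)
  let b₂ := HilbertBasis.mk hON2 (hdense η₂ hd2)
  obtain ⟨T, hT⟩ := b₁.exists_continuousLinearEquiv_apply_eq_smul_add_smul b₂
    (α := α / s) (β := β / s) (by simpa [norm_div, hs] using hne)
  refine ⟨b₁, T, b₁.orthonormal, b₁.dense_span, fun h => ?_⟩
  rw [hT, HilbertBasis.coe_mk, HilbertBasis.coe_mk, map_add, map_smul, map_smul]
  simp only [smul_smul, div_mul_cancel₀ _ hs]

theorem stmt17 {G : Type*} [Group G] [Countable G]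
    {H : Type*} [NormedAddCommGroup H] [InnerProductSpace ℂ H] [CompleteSpace H]
    (π : G →* (H ≃ₗᵢ[ℂ] H)) (K : Subgroup G) (N : ℕ) (hN : 0 < N)
    (hidx : K.index = N) (η₁ η₂ : H)
    (h1 : IsParsevalFrameVector π η₁) (h2 : IsParsevalFrameVector π η₂)
    (hdisj : StronglyDisjointPairIn π π η₁ η₂ ⊤ ⊤)
    (hON1 : Orthonormal ℂ (fun h : K => (Real.sqrt N : ℂ) • π (h : G) η₁))
    (hd1 : (Submodule.span ℂ (Set.range fun h : K => π (h : G) η₁)).topologicalClosure = ⊤)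
    (hON2 : Orthonormal ℂ (fun h : K => (Real.sqrt N : ℂ) • π (h : G) η₂))
    (hd2 : (Submodule.span ℂ (Set.range fun h : K => π (h : G) η₂)).topologicalClosure = ⊤)
    (α β : ℂ) (hab : ‖α‖ ^ 2 + ‖β‖ ^ 2 = 1) (hne : ‖α‖ ≠ ‖β‖) :
    IsParsevalFrameVector π (α • η₁ + β • η₂) ∧
    ∃ (e : K → H) (T : H ≃L[ℂ] H), Orthonormal ℂ e ∧
      (Submodule.span ℂ (Set.range e)).topologicalClosure = ⊤ ∧
      ∀ h : K, π (h : G) (α • η₁ + β • η₂) = T (e h) :=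
  stmt17_general π K N hN η₁ η₂ h1 h2 hdisj hON1 hd1 hON2 hd2 α β hab hne
end
end
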